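/- arXiv:1409.6263 — 4 statements merged into one kernel-verified Lean document; each statement's English description precedes it below -/
import Mathlib

section
/- Let S(ℓ, k) denote the set of double sequences of level ℓ and shape k = (k₁,…,kₙ). For any 1 ≤ t ≤ n, |S(ℓ, (k₁,…,kₙ))| = ∑_{h=0}^{ℓ} |S(ℓ, (k₁,…,k_t, h))| · |S(ℓ, (h, k_{t+1},…,kₙ))|. -/
/-- A double sequence of level `ℓ` and shape `k`. -/
def IsDoubleSeq {n : ℕ} (ℓ : ℤ) (k x y : Fin n → ℤ) : Prop :=
  (∀ j, 0 ≤ x j ∧ x j ≤ ℓ ∧ 0 ≤ y j ∧ y j ≤ ℓ) ∧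
  (∀ j, x j + y j = k j) ∧
  (∀ i, x i + ∑ j ∈ Finset.Iio i, (x j - y j) ≤ ℓ) ∧
  (∀ i, 0 ≤ -y i + ∑ j ∈ Finset.Iio i, (x j - y j)) ∧
  (∑ j, x j = ∑ j, y j)

/-- The number of double sequences of level `ℓ` and shape `k`. -/
noncomputable def DSCard {n : ℕ} (ℓ : ℤ) (k : Fin n → ℤ) : ℕ :=
  Nat.card {p : (Fin n → ℤ) × (Fin n → ℤ) // IsDoubleSeq ℓ k p.1 p.2}

/-!
Read a double sequence as a walk: column `i` starts at height `∑_{j<i} (x j - y j)`, rises by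
`x i` and falls by `y i`, always staying in `[0, ℓ]`, and the walk returns to height `0`.
Allowing arbitrary start and end heights, the conditions split over a concatenation of shapes
at the height `h ∈ [0, ℓ]` reached at the cut. A double sequence of shape `(k₁, …, k_t, h)`
is forced to end with the column `(0, h)`, and one of shape `(h, k_{t+1}, …)` to start with
`(h, 0)`, so these are exactly the walks from `0` to `h` on `(k₁, …, k_t)` and from `h` to `0`
on `(k_{t+1}, …, kₙ)`.
-/

open Finset

theorem Fin.sum_Iio_natAdd {M : Type*} [AddCommMonoid M] {m n : ℕ} (f : Fin (m + n) → M)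
    (i : Fin n) :
    ∑ j ∈ Iio (natAdd m i), f j = ∑ j, f (castAdd n j) + ∑ j ∈ Iio i, f (natAdd m j) := by
  have hlt (j : Fin m) : castAdd n j < natAdd m i := by simp [Fin.lt_def]; omega
  simp [← filter_gt_eq_Iio, sum_filter, sum_univ_add, hlt]

/-- The bounds `ξ ≤ ℓ` and `η ≤ ℓ` of `IsDoubleSeq` are implied here. -/
def IsColumnAt (ℓ h κ ξ η : ℤ) : Prop :=
  0 ≤ ξ ∧ 0 ≤ η ∧ ξ + η = κ ∧ h + ξ ≤ ℓ ∧ η ≤ h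

def IsDoublePath {n : ℕ} (ℓ a b : ℤ) (k x y : Fin n → ℤ) : Prop :=
  (∀ i, IsColumnAt ℓ (a + ∑ j ∈ Iio i, (x j - y j)) (k i) (x i) (y i)) ∧
    a + ∑ j, (x j - y j) = b

section Paths

variable {ℓ a b : ℤ}

theorem isDoubleSeq_iff_isDoublePath {n : ℕ} {k x y : Fin n → ℤ} :
    IsDoubleSeq ℓ k x y ↔ IsDoublePath ℓ 0 0 k x y := by
  simp only [IsDoubleSeq, IsDoublePath, IsColumnAt, zero_add, sum_sub_distrib, sub_eq_zero]
  constructor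
  · rintro ⟨hb, hk, hx, hy, hs⟩
    exact ⟨fun i => by have := hb i; have := hk i; have := hx i; have := hy i; omega, hs⟩
  · rintro ⟨hc, hs⟩
    refine ⟨fun i => ?_, fun i => (hc i).2.2.1, fun i => ?_, fun i => ?_, hs⟩ <;>
      · have := hc i; omega

theorem isDoublePath_append {m n : ℕ} {k x y : Fin m → ℤ} {k' x' y' : Fin n → ℤ} :
    IsDoublePath ℓ a b (Fin.append k k') (Fin.append x x') (Fin.append y y') ↔
      ∃ c, IsDoublePath ℓ a c k x y ∧ IsDoublePath ℓ c b k' x' y' := by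
  simp only [IsDoublePath, Fin.forall_fin_add, Fin.sum_Iio_castAdd, Fin.sum_Iio_natAdd,
    Fin.sum_univ_add, Fin.append_left, Fin.append_right, ← add_assoc]
  constructor
  · rintro ⟨⟨hA, hB⟩, hs⟩
    exact ⟨_, ⟨hA, rfl⟩, hB, hs⟩
  · rintro ⟨c, ⟨hA, rfl⟩, hB, hs⟩
    exact ⟨⟨hA, hB⟩, hs⟩

theorem isDoublePath_comp_cast {m n : ℕ} (e : m = n) {k x y : Fin n → ℤ} :
    IsDoublePath ℓ a b (k ∘ Fin.cast e) (x ∘ Fin.cast e) (y ∘ Fin.cast e) ↔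
      IsDoublePath ℓ a b k x y := by
  subst e; rfl

theorem isDoublePath_fin_one {k x y : Fin 1 → ℤ} :
    IsDoublePath ℓ a b k x y ↔ IsColumnAt ℓ a (k 0) (x 0) (y 0) ∧ a + (x 0 - y 0) = b := by
  simp [IsDoublePath, Fin.forall_fin_one, show Iio (0 : Fin 1) = ∅ by decide]

theorem isDoublePath_snoc {n : ℕ} {k x y : Fin n → ℤ} {κ ξ η : ℤ} :
    IsDoublePath ℓ a b (Fin.snoc k κ) (Fin.snoc x ξ) (Fin.snoc y η) ↔
      ∃ c, IsDoublePath ℓ a c k x y ∧ IsColumnAt ℓ c κ ξ η ∧ c + (ξ - η) = b := by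
  simp only [Fin.snoc_eq_append, isDoublePath_append, isDoublePath_fin_one, Fin.cons_zero]

theorem isDoublePath_cons {n : ℕ} {k x y : Fin n → ℤ} {κ ξ η : ℤ} :
    IsDoublePath ℓ a b (Fin.cons κ k) (Fin.cons ξ x) (Fin.cons η y) ↔
      IsColumnAt ℓ a κ ξ η ∧ IsDoublePath ℓ (a + (ξ - η)) b k x y := by
  rw [Fin.cons_eq_append κ, Fin.cons_eq_append ξ, Fin.cons_eq_append η, isDoublePath_comp_cast,
    isDoublePath_append]
  simp only [isDoublePath_fin_one, Fin.cons_zero, and_assoc, exists_and_left, exists_eq_left']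

theorem IsDoublePath.end_mem_Icc {n : ℕ} {k x y : Fin n → ℤ} (hp : IsDoublePath ℓ a b k x y)
    (ha₀ : 0 ≤ a) (haℓ : a ≤ ℓ) : 0 ≤ b ∧ b ≤ ℓ := by
  cases n with
  | zero =>
    obtain rfl : a = b := by simpa [IsDoublePath] using hp.2
    exact ⟨ha₀, haℓ⟩
  | succ n =>
    rw [← Fin.snoc_init_self k, ← Fin.snoc_init_self x, ← Fin.snoc_init_self y,
      isDoublePath_snoc] at hp
    obtain ⟨c, -, ⟨hξ, hη, -, hcξ, hηc⟩, rfl⟩ := hp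
    omega

end Paths

section Boundary

variable {ℓ h : ℤ} {n : ℕ} {k : Fin n → ℤ} {x y : Fin (n + 1) → ℤ}

theorem isDoubleSeq_snoc_iff :
    IsDoubleSeq ℓ (Fin.snoc k h) x y ↔
      x (Fin.last n) = 0 ∧ y (Fin.last n) = h ∧ 0 ≤ h ∧ h ≤ ℓ ∧
        IsDoublePath ℓ 0 h k (Fin.init x) (Fin.init y) := by
  obtain ⟨x, ξ, rfl⟩ : ∃ x' ξ, x = Fin.snoc x' ξ := ⟨_, _, (Fin.snoc_init_self x).symm⟩
  obtain ⟨y, η, rfl⟩ : ∃ y' η, y = Fin.snoc y' η := ⟨_, _, (Fin.snoc_init_self y).symm⟩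
  simp only [isDoubleSeq_iff_isDoublePath, isDoublePath_snoc, IsColumnAt, Fin.snoc_last,
    Fin.init_snoc]
  constructor
  · rintro ⟨c, hp, ⟨hξ, hη, hκ, hcξ, hηc⟩, hb⟩
    obtain rfl : c = h := by omega
    exact ⟨by omega, by omega, by omega, by omega, hp⟩
  · rintro ⟨rfl, rfl, h₀, hℓ, hp⟩
    exact ⟨_, hp, by omega, by omega⟩

theorem isDoubleSeq_cons_iff :
    IsDoubleSeq ℓ (Fin.cons h k) x y ↔
      x 0 = h ∧ y 0 = 0 ∧ 0 ≤ h ∧ h ≤ ℓ ∧ IsDoublePath ℓ h 0 k (Fin.tail x) (Fin.tail y) := by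
  obtain ⟨ξ, x, rfl⟩ : ∃ ξ x', x = Fin.cons ξ x' := ⟨_, _, (Fin.cons_self_tail x).symm⟩
  obtain ⟨η, y, rfl⟩ : ∃ η y', y = Fin.cons η y' := ⟨_, _, (Fin.cons_self_tail y).symm⟩
  simp only [isDoubleSeq_iff_isDoublePath, isDoublePath_cons, IsColumnAt, Fin.cons_zero,
    Fin.tail_cons]
  constructor
  · rintro ⟨⟨hξ, hη, hκ, hξℓ, hη0⟩, hp⟩
    obtain rfl : η = 0 := by omega
    obtain rfl : ξ = h := by omega
    exact ⟨rfl, rfl, hξ, by omega, by simpa using hp⟩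
  · rintro ⟨rfl, rfl, h₀, hℓ, hp⟩
    exact ⟨by omega, by simpa using hp⟩

theorem IsDoubleSeq.snoc_init_eq (hs : IsDoubleSeq ℓ (Fin.snoc k h) x y) :
    Fin.snoc (Fin.init x) 0 = x ∧ Fin.snoc (Fin.init y) h = y := by
  obtain ⟨hx, hy, -⟩ := isDoubleSeq_snoc_iff.1 hs
  exact ⟨hx ▸ Fin.snoc_init_self x, hy ▸ Fin.snoc_init_self y⟩

theorem IsDoubleSeq.sum_init_eq (hs : IsDoubleSeq ℓ (Fin.snoc k h) x y) :
    ∑ i, (Fin.init x i - Fin.init y i) = h := by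
  simpa using (isDoubleSeq_snoc_iff.1 hs).2.2.2.2.2

theorem IsDoubleSeq.cons_tail_eq (hs : IsDoubleSeq ℓ (Fin.cons h k) x y) :
    Fin.cons h (Fin.tail x) = x ∧ Fin.cons 0 (Fin.tail y) = y := by
  obtain ⟨hx, hy, -⟩ := isDoubleSeq_cons_iff.1 hs
  exact ⟨hx ▸ Fin.cons_self_tail x, hy ▸ Fin.cons_self_tail y⟩

end Boundary

theorem isDoubleSeq_append_iff {ℓ h : ℤ} {p q : ℕ} (hℓ : 0 ≤ ℓ) {kA xA yA : Fin p → ℤ}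
    {kB xB yB : Fin q → ℤ} (hh : ∑ i, (xA i - yA i) = h) :
    IsDoubleSeq ℓ (Fin.append kA kB) (Fin.append xA xB) (Fin.append yA yB) ↔
      IsDoubleSeq ℓ (Fin.snoc kA h) (Fin.snoc xA 0) (Fin.snoc yA h) ∧
        IsDoubleSeq ℓ (Fin.cons h kB) (Fin.cons h xB) (Fin.cons 0 yB) := by
  simp only [isDoubleSeq_iff_isDoublePath (k := Fin.append kA kB), isDoublePath_append,
    isDoubleSeq_snoc_iff, isDoubleSeq_cons_iff, Fin.snoc_last, Fin.init_snoc, Fin.cons_zero,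
    Fin.tail_cons, true_and]
  constructor
  · rintro ⟨c, hA, hB⟩
    obtain rfl : c = h := by rw [← hA.2, zero_add, hh]
    obtain ⟨h₀, hhℓ⟩ := hA.end_mem_Icc le_rfl hℓ
    exact ⟨⟨h₀, hhℓ, hA⟩, h₀, hhℓ, hB⟩
  · rintro ⟨⟨-, -, hA⟩, -, -, hB⟩
    exact ⟨h, hA, hB⟩

abbrev DoubleSeqs {n : ℕ} (ℓ : ℤ) (k : Fin n → ℤ) : Type :=
  {p : (Fin n → ℤ) × (Fin n → ℤ) // IsDoubleSeq ℓ k p.1 p.2}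

instance {n : ℕ} (ℓ : ℤ) (k : Fin n → ℤ) : Finite (DoubleSeqs ℓ k) :=
  Set.Finite.to_subtype <|
    ((Set.finite_Icc (0 : Fin n → ℤ) fun _ => ℓ).prod (Set.finite_Icc 0 fun _ => ℓ)).subset
      fun _ hp => ⟨⟨fun j => (hp.1 j).1, fun j => (hp.1 j).2.1⟩,
        ⟨fun j => (hp.1 j).2.2.1, fun j => (hp.1 j).2.2.2⟩⟩

def doubleSeqsAppendEquiv {p q : ℕ} (ℓ : ℕ) (kA : Fin p → ℤ) (kB : Fin q → ℤ) :
    DoubleSeqs ℓ (Fin.append kA kB) ≃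
      Σ h : Fin (ℓ + 1), {r : ((Fin (p + 1) → ℤ) × (Fin (p + 1) → ℤ)) ×
          ((Fin (q + 1) → ℤ) × (Fin (q + 1) → ℤ)) //
        IsDoubleSeq ℓ (Fin.snoc kA (h : ℕ)) r.1.1 r.1.2 ∧
          IsDoubleSeq ℓ (Fin.cons ((h : ℕ) : ℤ) kB) r.2.1 r.2.2} where
  toFun s :=
    let xA := fun i => s.1.1 (Fin.castAdd q i)
    let yA := fun i => s.1.2 (Fin.castAdd q i)
    let xB := fun i => s.1.1 (Fin.natAdd p i)
    let yB := fun i => s.1.2 (Fin.natAdd p i)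
    have hs : IsDoubleSeq ℓ (Fin.append kA kB) (Fin.append xA xB) (Fin.append yA yB) := by
      simpa only [xA, xB, yA, yB, Fin.append_castAdd_natAdd] using s.2
    have hA := isDoubleSeq_snoc_iff.1 ((isDoubleSeq_append_iff (Nat.cast_nonneg ℓ) rfl).1 hs).1
    have hnat : ((∑ i, (xA i - yA i)).toNat : ℤ) = ∑ i, (xA i - yA i) :=
      Int.toNat_of_nonneg hA.2.2.1
    ⟨⟨(∑ i, (xA i - yA i)).toNat, by have := hA.2.2.2.1; omega⟩,
      ⟨((Fin.snoc xA 0, Fin.snoc yA _), (Fin.cons _ xB, Fin.cons 0 yB)),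
        (isDoubleSeq_append_iff (Nat.cast_nonneg ℓ) hnat.symm).1 hs⟩⟩
  invFun r :=
    ⟨(Fin.append (Fin.init r.2.1.1.1) (Fin.tail r.2.1.2.1),
        Fin.append (Fin.init r.2.1.1.2) (Fin.tail r.2.1.2.2)), by
      obtain ⟨h, ⟨⟨X, Y⟩, ⟨X', Y'⟩⟩, hA, hB⟩ := r
      dsimp only at hA hB ⊢
      refine (isDoubleSeq_append_iff (Nat.cast_nonneg ℓ) hA.sum_init_eq).2 ⟨?_, ?_⟩
      · rwa [hA.snoc_init_eq.1, hA.snoc_init_eq.2]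
      · rwa [hB.cons_tail_eq.1, hB.cons_tail_eq.2]⟩
  left_inv s := by
    ext : 2 <;> simp only [Fin.init_snoc, Fin.tail_cons, Fin.append_castAdd_natAdd]
  right_inv r := by
    obtain ⟨h, ⟨⟨X, Y⟩, ⟨X', Y'⟩⟩, hA, hB⟩ := r
    dsimp only at hA hB
    ext : 1
    · simp [hA.sum_init_eq]
    · simpa [hA.sum_init_eq] using ⟨hA.snoc_init_eq, hB.cons_tail_eq⟩

theorem dsCard_append {p q : ℕ} (ℓ : ℕ) (kA : Fin p → ℤ) (kB : Fin q → ℤ) :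
    DSCard ℓ (Fin.append kA kB) =
      ∑ h ∈ range (ℓ + 1), DSCard ℓ (Fin.snoc kA (h : ℤ)) * DSCard ℓ (Fin.cons (h : ℤ) kB) := by
  rw [← Fin.sum_univ_eq_sum_range
    (fun h => DSCard ℓ (Fin.snoc kA (h : ℤ)) * DSCard ℓ (Fin.cons (h : ℤ) kB))]
  calc DSCard ℓ (Fin.append kA kB)
      = Nat.card (Σ h : Fin (ℓ + 1),
          DoubleSeqs ℓ (Fin.snoc kA (h : ℕ)) × DoubleSeqs ℓ (Fin.cons ((h : ℕ) : ℤ) kB)) :=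
        Nat.card_congr <| (doubleSeqsAppendEquiv ℓ kA kB).trans <| Equiv.sigmaCongrRight fun _ =>
          Equiv.subtypeProdEquivProd (p := fun r : _ × _ => IsDoubleSeq _ _ r.1 r.2)
            (q := fun r : _ × _ => IsDoubleSeq _ _ r.1 r.2)
    _ = _ := by simp only [Nat.card_sigma, Nat.card_prod, DSCard]

theorem dsCard_comp_cast {m n : ℕ} (e : m = n) (ℓ : ℤ) (k : Fin n → ℤ) :
    DSCard ℓ (k ∘ Fin.cast e) = DSCard ℓ k := by
  subst e; rfl

/-- the factorization rule for counting double sequences: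
`|S(ℓ,(k₁,…,kₙ))| = ∑_{h=0}^{ℓ} |S(ℓ,(k₁,…,k_t,h))| ⬝ |S(ℓ,(h,k_{t+1},…,kₙ))|`. -/
theorem stmt7 (n ℓ t : ℕ) (ht2 : t ≤ n) (k : Fin n → ℤ) :
    DSCard (ℓ : ℤ) k =
      ∑ h ∈ Finset.range (ℓ + 1),
        DSCard (ℓ : ℤ) (Fin.snoc (fun j : Fin t => k (Fin.castLE ht2 j)) (h : ℤ)) *
        DSCard (ℓ : ℤ)
          (Fin.cons (h : ℤ) (fun j : Fin (n - t) => k ⟨t + j.1, by omega⟩)) := by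
  have hsplit : Fin.append (fun j : Fin t => k (Fin.castLE ht2 j))
      (fun j : Fin (n - t) => k ⟨t + j.1, by omega⟩) = k ∘ Fin.cast (Nat.add_sub_cancel' ht2) :=
    Fin.append_castAdd_natAdd (f := k ∘ Fin.cast (Nat.add_sub_cancel' ht2))
  rw [← dsCard_comp_cast (Nat.add_sub_cancel' ht2) _ k, ← hsplit, dsCard_append]
end

section
/- For weights 0 ≤ k₁, k₂, k₃ ≤ ℓ, the number of double sequences of level ℓ and shape (k₁,k₂,k₃) equals 1 if k₁+k₂+k₃ is even, k₁+k₂+k₃ ≤ 2ℓ, and each kⱼ ≤ (k₁+k₂+k₃)/2; otherwise it equals 0. -/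
theorem isDoubleSeq_fin_three_iff (ℓ : ℤ) (k x y : Fin 3 → ℤ) :
    IsDoubleSeq ℓ k x y ↔
      (0 ≤ x 0 ∧ x 0 ≤ ℓ ∧ 0 ≤ y 0 ∧ y 0 ≤ ℓ) ∧
      (0 ≤ x 1 ∧ x 1 ≤ ℓ ∧ 0 ≤ y 1 ∧ y 1 ≤ ℓ) ∧
      (0 ≤ x 2 ∧ x 2 ≤ ℓ ∧ 0 ≤ y 2 ∧ y 2 ≤ ℓ) ∧
      x 0 + y 0 = k 0 ∧ x 1 + y 1 = k 1 ∧ x 2 + y 2 = k 2 ∧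
      x 1 + (x 0 - y 0) ≤ ℓ ∧ x 2 + (x 0 - y 0) + (x 1 - y 1) ≤ ℓ ∧
      y 0 = 0 ∧ y 1 ≤ x 0 - y 0 ∧ y 2 ≤ x 0 - y 0 + (x 1 - y 1) ∧
      x 0 + x 1 + x 2 = y 0 + y 1 + y 2 := by
  have Iio_zero : Finset.Iio (0 : Fin 3) = ∅ := by decide
  have Iio_one : Finset.Iio (1 : Fin 3) = {0} := by decide
  have Iio_two : Finset.Iio (2 : Fin 3) = {0, 1} := by decide
  simp only [IsDoubleSeq, Fin.forall_fin_succ, IsEmpty.forall_iff, Fin.succ_zero_eq_one,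
    Fin.succ_one_eq_two, Fin.sum_univ_three, Iio_zero, Iio_one, Iio_two, Finset.sum_empty,
    Finset.sum_singleton, Finset.sum_pair (show (0 : Fin 3) ≠ 1 by decide), and_true]
  omega

def FusionAdmissible (ℓ k₁ k₂ k₃ : ℤ) : Prop :=
  Even (k₁ + k₂ + k₃) ∧ k₁ + k₂ + k₃ ≤ 2 * ℓ ∧
    2 * k₁ ≤ k₁ + k₂ + k₃ ∧ 2 * k₂ ≤ k₁ + k₂ + k₃ ∧ 2 * k₃ ≤ k₁ + k₂ + k₃

/-- The divisions by `2` are exact when `k₁ + k₂ + k₃` is even. -/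
def fusionWitness (k₁ k₂ k₃ : ℤ) : (Fin 3 → ℤ) × (Fin 3 → ℤ) :=
  (![k₁, (k₂ + k₃ - k₁) / 2, 0], ![0, (k₁ + k₂ - k₃) / 2, k₃])

section

variable {ℓ k₁ k₂ k₃ : ℤ} {x y : Fin 3 → ℤ}

theorem IsDoubleSeq.fusionAdmissible (h : IsDoubleSeq ℓ ![k₁, k₂, k₃] x y) :
    FusionAdmissible ℓ k₁ k₂ k₃ := by
  simp only [isDoubleSeq_fin_three_iff, Matrix.cons_val_zero, Matrix.cons_val_one,
    Matrix.cons_val_two, Matrix.head_cons, Matrix.tail_cons] at h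
  exact ⟨⟨x 1 + k₁, by omega⟩, by omega, by omega, by omega, by omega⟩

theorem IsDoubleSeq.eq_fusionWitness (h : IsDoubleSeq ℓ ![k₁, k₂, k₃] x y) :
    (x, y) = fusionWitness k₁ k₂ k₃ := by
  simp only [isDoubleSeq_fin_three_iff, Matrix.cons_val_zero, Matrix.cons_val_one,
    Matrix.cons_val_two, Matrix.head_cons, Matrix.tail_cons] at h
  ext j <;> fin_cases j <;> simp [fusionWitness] <;> omega

theorem isDoubleSeq_fusionWitness (h : FusionAdmissible ℓ k₁ k₂ k₃) :
    IsDoubleSeq ℓ ![k₁, k₂, k₃] (fusionWitness k₁ k₂ k₃).1 (fusionWitness k₁ k₂ k₃).2 := by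
  obtain ⟨⟨m, hm⟩, hbounds⟩ := h
  simp only [isDoubleSeq_fin_three_iff, fusionWitness, Matrix.cons_val_zero, Matrix.cons_val_one,
    Matrix.cons_val_two, Matrix.head_cons, Matrix.tail_cons, true_and]
  omega

end

theorem stmt10_general (ℓ k₁ k₂ k₃ : ℤ) :
    DSCard ℓ (![k₁, k₂, k₃]) =
      if Even (k₁ + k₂ + k₃) ∧ k₁ + k₂ + k₃ ≤ 2 * ℓ ∧
          2 * k₁ ≤ k₁ + k₂ + k₃ ∧ 2 * k₂ ≤ k₁ + k₂ + k₃ ∧ 2 * k₃ ≤ k₁ + k₂ + k₃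
      then 1 else 0 := by
  unfold DSCard
  split_ifs with hadm
  · exact Nat.card_eq_one_iff_exists.2
      ⟨⟨_, isDoubleSeq_fusionWitness hadm⟩, fun p => Subtype.ext p.2.eq_fusionWitness⟩
  · exact Nat.card_eq_zero.2 (.inl ⟨fun p => hadm p.2.fusionAdmissible⟩)

/-- fusion rule for three points. For `0 ≤ k₁,k₂,k₃ ≤ ℓ`, the number
of double sequences of level `ℓ` and shape `(k₁,k₂,k₃)` is `1` exactly when
`k₁+k₂+k₃` is even, `k₁+k₂+k₃ ≤ 2ℓ`, and each `kⱼ ≤ (k₁+k₂+k₃)/2`; else `0`. -/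
theorem stmt10 (ℓ k₁ k₂ k₃ : ℤ)
    (h01 : 0 ≤ k₁) (h11 : k₁ ≤ ℓ) (h02 : 0 ≤ k₂) (h12 : k₂ ≤ ℓ)
    (h03 : 0 ≤ k₃) (h13 : k₃ ≤ ℓ) :
    DSCard ℓ (![k₁, k₂, k₃]) =
      if Even (k₁ + k₂ + k₃) ∧ k₁ + k₂ + k₃ ≤ 2 * ℓ ∧
          2 * k₁ ≤ k₁ + k₂ + k₃ ∧ 2 * k₂ ≤ k₁ + k₂ + k₃ ∧ 2 * k₃ ≤ k₁ + k₂ + k₃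
      then 1 else 0 :=
  stmt10_general ℓ k₁ k₂ k₃
end

section
/- Let DS be a double sequence of level ℓ, height h(DS) > 1, and shape k = (k₁,…,kₙ) with k₁ ≥ ⋯ ≥ kₙ > 0. Then there exists a nonempty subset T ⊆ {1,…,n} of even cardinality and a double sequence DS' of level ℓ - 1 with height h(DS') = h(DS) - 1 and shape k' where k'ⱼ = kⱼ - 1 for j ∈ T and k'ⱼ = kⱼ for j ∉ T. -/
/-- The height of a double sequence: the maximum over `1 ≤ i ≤ n-1` (here the
first `n-1` indices) of `xᵢ + ∑_{j<i}(xⱼ - yⱼ)`. -/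
def DSHeight (n : ℕ) (hn : 2 ≤ n) (x y : Fin n → ℤ) : ℤ :=
  (Finset.univ.filter fun i : Fin n => (i : ℕ) < n - 1).sup'
    ⟨⟨0, by omega⟩, by simp [Finset.mem_filter]; omega⟩
    (fun i => x i + ∑ j ∈ Finset.Iio i, (x j - y j))

namespace DoubleSeq

open Finset

section Walk

variable (X Y : ℕ → ℤ)

def walk (i : ℕ) : ℤ := ∑ j ∈ range i, (X j - Y j)

def IsBoundedWalk (n : ℕ) (c : ℤ) : Prop :=
  (∀ i < n, 0 ≤ X i ∧ 0 ≤ Y i ∧ Y i ≤ walk X Y i ∧ X i + walk X Y i ≤ c) ∧ walk X Y n = 0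

variable (c : ℤ)

/-- `true` where the lowered walk runs one unit below `walk X Y`. -/
def shifted : ℕ → Bool
  | 0 => false
  | i + 1 => if shifted i then walk X Y i ≠ Y i else X i + walk X Y i = c

def opening (i : ℕ) : Bool := !shifted X Y c i && X i + walk X Y i = c

def closing (i : ℕ) : Bool := shifted X Y c i && walk X Y i = Y i

def lowerX (i : ℕ) : ℤ := if opening X Y c i then X i - 1 else X i

def lowerY (i : ℕ) : ℤ := if closing X Y c i then Y i - 1 else Y i

variable {X Y c}

@[simp] theorem walk_zero : walk X Y 0 = 0 := rfl

theorem walk_succ (i : ℕ) : walk X Y (i + 1) = walk X Y i + X i - Y i := by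
  rw [walk, sum_range_succ, ← walk]; ring

theorem ite_shifted_succ (i : ℕ) :
    (if shifted X Y c (i + 1) then 1 else 0 : ℤ) = (if shifted X Y c i then 1 else 0) +
      (if opening X Y c i then 1 else 0) - (if closing X Y c i then 1 else 0) := by
  cases hs : shifted X Y c i <;> by_cases hp : X i + walk X Y i = c <;>
    by_cases hv : walk X Y i = Y i <;> simp [shifted, opening, closing, hs, hp, hv]

theorem walk_lower (i : ℕ) :
    walk (lowerX X Y c) (lowerY X Y c) i = walk X Y i - if shifted X Y c i then 1 else 0 := by
  induction i with
  | zero => simp [shifted]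
  | succ i ih =>
    rw [walk_succ, walk_succ, ih, ite_shifted_succ, lowerX, lowerY]
    split_ifs <;> ring

theorem sum_range_opening_sub_closing (i : ℕ) :
    ∑ j ∈ range i, ((if opening X Y c j then 1 else 0) - (if closing X Y c j then 1 else 0) : ℤ) =
      if shifted X Y c i then 1 else 0 := by
  induction i with
  | zero => simp [shifted]
  | succ i ih => rw [sum_range_succ, ih, ite_shifted_succ]; ring

theorem exists_opening_lt_of_shifted {i : ℕ} (hs : shifted X Y c i) :
    ∃ j < i, opening X Y c j := by
  induction i with
  | zero => simp [shifted] at hs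
  | succ i ih =>
    by_cases hi : shifted X Y c i
    · obtain ⟨j, hj, ho⟩ := ih hi
      exact ⟨j, by omega, ho⟩
    · refine ⟨i, by omega, ?_⟩
      simp_all [shifted, opening]

theorem exists_opening_le_of_peak {i : ℕ} (hi : X i + walk X Y i = c) :
    ∃ j ≤ i, opening X Y c j := by
  by_cases hs : shifted X Y c i
  · obtain ⟨j, hj, ho⟩ := exists_opening_lt_of_shifted hs
    exact ⟨j, hj.le, ho⟩
  · exact ⟨i, le_rfl, by simp [opening, hs, hi]⟩

theorem lower_of_shifted {i : ℕ} (hs : shifted X Y c i) :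
    lowerX X Y c i = X i ∧ lowerY X Y c i = (if walk X Y i = Y i then Y i - 1 else Y i) ∧
      walk (lowerX X Y c) (lowerY X Y c) i = walk X Y i - 1 := by
  simp [lowerX, lowerY, opening, closing, walk_lower, hs]

theorem lower_of_not_shifted {i : ℕ} (hs : shifted X Y c i = false) :
    lowerX X Y c i = (if X i + walk X Y i = c then X i - 1 else X i) ∧ lowerY X Y c i = Y i ∧
      walk (lowerX X Y c) (lowerY X Y c) i = walk X Y i := by
  simp [lowerX, lowerY, opening, closing, walk_lower, hs]

theorem lowerX_add_walk_lower_le {i : ℕ} (hi : X i + walk X Y i ≤ c) :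
    lowerX X Y c i + walk (lowerX X Y c) (lowerY X Y c) i ≤ c - 1 := by
  cases hs : shifted X Y c i
  · obtain ⟨hx, -, hw⟩ := lower_of_not_shifted hs
    rw [hx, hw]; split_ifs <;> omega
  · obtain ⟨hx, -, hw⟩ := lower_of_shifted hs
    rw [hx, hw]; omega

theorem lowerX_add_walk_lower_of_peak {i : ℕ} (hi : X i + walk X Y i = c) :
    lowerX X Y c i + walk (lowerX X Y c) (lowerY X Y c) i = c - 1 := by
  cases hs : shifted X Y c i
  · obtain ⟨hx, -, hw⟩ := lower_of_not_shifted hs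
    rw [hx, hw, if_pos hi]; omega
  · obtain ⟨hx, -, hw⟩ := lower_of_shifted hs
    rw [hx, hw]; omega

theorem lowerY_le_walk_lower {i : ℕ} (hi : Y i ≤ walk X Y i) :
    lowerY X Y c i ≤ walk (lowerX X Y c) (lowerY X Y c) i := by
  cases hs : shifted X Y c i
  · obtain ⟨-, hy, hw⟩ := lower_of_not_shifted hs
    rw [hy, hw]; exact hi
  · obtain ⟨-, hy, hw⟩ := lower_of_shifted hs
    rw [hy, hw]; split_ifs <;> omega

theorem lowerX_nonneg {i : ℕ} (hX : 0 ≤ X i)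
    (hi : walk (lowerX X Y c) (lowerY X Y c) i ≤ c - 1) : 0 ≤ lowerX X Y c i := by
  cases hs : shifted X Y c i
  · obtain ⟨hx, -, hw⟩ := lower_of_not_shifted hs
    rw [hx]; rw [hw] at hi; split_ifs <;> omega
  · obtain ⟨hx, -, -⟩ := lower_of_shifted hs
    rwa [hx]

theorem lowerY_nonneg {i : ℕ} (hY : 0 ≤ Y i)
    (hi : 0 ≤ walk (lowerX X Y c) (lowerY X Y c) i) : 0 ≤ lowerY X Y c i := by
  cases hs : shifted X Y c i
  · obtain ⟨-, hy, -⟩ := lower_of_not_shifted hs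
    rwa [hy]
  · obtain ⟨-, hy, hw⟩ := lower_of_shifted hs
    rw [hy]; rw [hw] at hi; split_ifs <;> omega

theorem closing_eq_false_of_opening {i : ℕ} (ho : opening X Y c i) : closing X Y c i = false := by
  simp_all [opening, closing]

theorem lowerX_add_lowerY (i : ℕ) :
    lowerX X Y c i + lowerY X Y c i =
      X i + Y i - if opening X Y c i || closing X Y c i then 1 else 0 := by
  by_cases ho : opening X Y c i
  · simp [lowerX, lowerY, ho, closing_eq_false_of_opening ho, sub_add_eq_add_sub]
  · cases hc : closing X Y c i <;> simp [lowerX, lowerY, ho, hc, add_sub_assoc]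

variable {n : ℕ}

theorem IsBoundedWalk.walk_lower_mem_Icc (hw : IsBoundedWalk X Y n c) (hc : 1 ≤ c) :
    ∀ i ≤ n, walk (lowerX X Y c) (lowerY X Y c) i ∈ Set.Icc 0 (c - 1) := by
  intro i hi
  induction i with
  | zero => simp [hc]
  | succ i ih =>
    obtain ⟨hX, hY, hval, hpeak⟩ := hw.1 i hi
    obtain ⟨hlo, hup⟩ := ih (by omega)
    have := lowerX_nonneg hX hup
    have := lowerY_nonneg hY hlo
    have := lowerY_le_walk_lower (c := c) hval
    have := lowerX_add_walk_lower_le hpeak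
    constructor <;> rw [walk_succ] <;> omega

theorem IsBoundedWalk.shifted_eq_false (hw : IsBoundedWalk X Y n c) (hc : 1 ≤ c) :
    shifted X Y c n = false := by
  have := (hw.walk_lower_mem_Icc hc n le_rfl).1
  rw [walk_lower, hw.2] at this
  cases hs : shifted X Y c n <;> simp_all

theorem IsBoundedWalk.lower (hw : IsBoundedWalk X Y n c) (hc : 1 ≤ c) :
    IsBoundedWalk (lowerX X Y c) (lowerY X Y c) n (c - 1) := by
  refine ⟨fun i hi => ?_, by simp [walk_lower, hw.2, hw.shifted_eq_false hc]⟩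
  obtain ⟨hX, hY, hval, hpeak⟩ := hw.1 i hi
  obtain ⟨hlo, hup⟩ := hw.walk_lower_mem_Icc hc i hi.le
  exact ⟨lowerX_nonneg hX hup, lowerY_nonneg hY hlo, lowerY_le_walk_lower hval,
    lowerX_add_walk_lower_le hpeak⟩

theorem IsBoundedWalk.even_card_opening_or_closing (hw : IsBoundedWalk X Y n c) (hc : 1 ≤ c) :
    Even #{j ∈ range n | opening X Y c j || closing X Y c j} := by
  have hdisj : Disjoint {j ∈ range n | opening X Y c j} {j ∈ range n | closing X Y c j} :=
    disjoint_filter.2 fun j _ ho => by simp [closing_eq_false_of_opening ho]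
  have hcount : #{j ∈ range n | opening X Y c j} = #{j ∈ range n | closing X Y c j} := by
    have := sum_range_opening_sub_closing (X := X) (Y := Y) (c := c) n
    rw [hw.shifted_eq_false hc, sum_sub_distrib] at this
    zify; rw [natCast_card_filter, natCast_card_filter]; simpa [sub_eq_zero] using this
  simp only [Bool.or_eq_true, filter_or, card_union_of_disjoint hdisj, hcount]
  exact ⟨_, rfl⟩

/-- Bounds the peak at the last index, which `DSHeight` leaves out. -/
theorem add_walk_succ_le_of_walk_eq_zero {i : ℕ} (hend : walk X Y (i + 2) = 0)
    (hval : Y (i + 1) ≤ walk X Y (i + 1)) (hY : 0 ≤ Y i) :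
    X (i + 1) + walk X Y (i + 1) ≤ X i + walk X Y i := by
  rw [walk_succ] at hend
  have := walk_succ (X := X) (Y := Y) i
  omega

end Walk

section Restrict

variable {n : ℕ} (X Y : ℕ → ℤ)

theorem exists_eq_restrict {α : Type*} [Inhabited α] (x : Fin n → α) :
    ∃ X : ℕ → α, x = fun j : Fin n => X j :=
  ⟨Function.extend Fin.val x default,
    funext fun j => (Fin.val_injective.extend_apply x default j).symm⟩

theorem sum_Iio_sub_eq_walk (i : Fin n) : ∑ j ∈ Iio i, (X j - Y j) = walk X Y i := by
  rw [walk, ← Nat.Iio_eq_range, ← Fin.map_valEmbedding_Iio, sum_map]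
  rfl

theorem card_filter_univ_val (p : ℕ → Prop) [DecidablePred p] :
    #{j : Fin n | p j} = #{j ∈ range n | p j} := by
  rw [← Nat.Iio_eq_range, ← Fin.map_valEmbedding_univ, filter_map, card_map]
  rfl

theorem isDoubleSeq_restrict_iff (ℓ : ℤ) (k : Fin n → ℤ) :
    IsDoubleSeq ℓ k (fun j : Fin n => X j) (fun j => Y j) ↔
      (∀ i < n, 0 ≤ X i ∧ X i ≤ ℓ ∧ 0 ≤ Y i ∧ Y i ≤ ℓ) ∧ (∀ j : Fin n, X j + Y j = k j) ∧
      (∀ i < n, X i + walk X Y i ≤ ℓ) ∧ (∀ i < n, Y i ≤ walk X Y i) ∧ walk X Y n = 0 := by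
  have hend : walk X Y n = ∑ j : Fin n, X j - ∑ j : Fin n, Y j := by
    rw [walk, ← Fin.sum_univ_eq_sum_range (fun j => X j - Y j), sum_sub_distrib]
  simp only [IsDoubleSeq, sum_Iio_sub_eq_walk, Fin.forall_iff, neg_add_eq_sub, sub_nonneg, hend,
    sub_eq_zero]

theorem dsHeight_restrict_eq_iff (hn : 2 ≤ n) (c : ℤ) :
    DSHeight n hn (fun j : Fin n => X j) (fun j => Y j) = c ↔
      (∀ i < n - 1, X i + walk X Y i ≤ c) ∧ ∃ i < n - 1, X i + walk X Y i = c := by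
  simp only [DSHeight, sum_Iio_sub_eq_walk]
  set F : Finset (Fin n) := {i | (i : ℕ) < n - 1}
  have hF : ∀ {i} (hi : i < n - 1), (⟨i, by omega⟩ : Fin n) ∈ F := fun hi => by simpa [F] using hi
  constructor
  · rintro rfl
    refine ⟨fun i hi => le_sup' (fun i : Fin n => X i + walk X Y i) (hF hi), ?_⟩
    obtain ⟨i, hi, he⟩ := exists_mem_eq_sup' _ fun i : Fin n => X i + walk X Y i
    exact ⟨i, (mem_filter.1 hi).2, he.symm⟩
  · rintro ⟨hle, i, hi, rfl⟩
    exact le_antisymm (sup'_le _ _ fun j hj => hle j (mem_filter.1 hj).2)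
      (le_sup' (fun i : Fin n => X i + walk X Y i) (hF hi))

variable {X Y}

theorem dsHeight_le_of_isDoubleSeq (hn : 2 ≤ n) {ℓ : ℤ} {k x y : Fin n → ℤ}
    (h : IsDoubleSeq ℓ k x y) : DSHeight n hn x y ≤ ℓ :=
  sup'_le _ _ fun i _ => h.2.2.1 i

theorem isBoundedWalk_of_isDoubleSeq (hn : 2 ≤ n) {ℓ : ℤ} {k : Fin n → ℤ}
    (h : IsDoubleSeq ℓ k (fun j : Fin n => X j) (fun j => Y j)) :
    IsBoundedWalk X Y n (DSHeight n hn (fun j : Fin n => X j) (fun j => Y j)) := by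
  obtain ⟨hbd, -, -, hval, hend⟩ := (isDoubleSeq_restrict_iff X Y ℓ k).1 h
  obtain ⟨hle, -⟩ := (dsHeight_restrict_eq_iff X Y hn _).1 rfl
  refine ⟨fun i hi => ⟨(hbd i hi).1, (hbd i hi).2.2.1, hval i hi, ?_⟩, hend⟩
  obtain hi | rfl : i < n - 1 ∨ i = n - 1 := by omega
  · exact hle i hi
  · obtain ⟨m, rfl⟩ : ∃ m, n = m + 2 := ⟨n - 2, by omega⟩
    have hlast := add_walk_succ_le_of_walk_eq_zero hend (hval _ (by omega)) (hbd m (by omega)).2.2.1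
    exact hlast.trans (hle m (by omega))

theorem IsBoundedWalk.isDoubleSeq {c ℓ : ℤ} {k : Fin n → ℤ} (hw : IsBoundedWalk X Y n c)
    (hcℓ : c ≤ ℓ) (hk : ∀ j : Fin n, X j + Y j = k j) :
    IsDoubleSeq ℓ k (fun j : Fin n => X j) (fun j => Y j) := by
  refine (isDoubleSeq_restrict_iff X Y ℓ k).2
    ⟨fun i hi => ?_, hk, fun i hi => (hw.1 i hi).2.2.2.trans hcℓ, fun i hi => (hw.1 i hi).2.2.1,
      hw.2⟩
  obtain ⟨hX, hY, hval, hpeak⟩ := hw.1 i hi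
  exact ⟨hX, by omega, hY, by omega⟩

end Restrict

end DoubleSeq

open DoubleSeq

theorem stmt18_general (n : ℕ) (hn : 2 ≤ n) (ℓ : ℤ) (k x y : Fin n → ℤ)
    (h : IsDoubleSeq ℓ k x y)
    (hh : 1 < DSHeight n hn x y) :
    ∃ T : Finset (Fin n), T.Nonempty ∧ Even T.card ∧
      ∃ x' y' : Fin n → ℤ,
        IsDoubleSeq (ℓ - 1) (fun j => if j ∈ T then k j - 1 else k j) x' y' ∧
        DSHeight n hn x' y' = DSHeight n hn x y - 1 := by
  obtain ⟨X, rfl⟩ := exists_eq_restrict x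
  obtain ⟨Y, rfl⟩ := exists_eq_restrict y
  set c := DSHeight n hn (fun j : Fin n => X j) (fun j => Y j)
  have hw : IsBoundedWalk X Y n c := isBoundedWalk_of_isDoubleSeq hn h
  have hc : 1 ≤ c := hh.le
  obtain ⟨-, i, hi, hpeak⟩ := (dsHeight_restrict_eq_iff X Y hn c).1 rfl
  obtain ⟨j, hji, hj⟩ := exists_opening_le_of_peak hpeak
  let T : Finset (Fin n) := {j | opening X Y c j || closing X Y c j}
  refine ⟨T, ⟨⟨j, by omega⟩, by simp [T, hj]⟩, ?_, fun j => lowerX X Y c j, fun j => lowerY X Y c j,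
    ?_, ?_⟩
  · rw [card_filter_univ_val fun j => opening X Y c j || closing X Y c j]
    exact hw.even_card_opening_or_closing hc
  · refine (hw.lower hc).isDoubleSeq (by linarith [dsHeight_le_of_isDoubleSeq hn h]) fun j => ?_
    rw [lowerX_add_lowerY, ((isDoubleSeq_restrict_iff X Y ℓ k).1 h).2.1 j]
    simp only [T, Finset.mem_filter_univ]
    split_ifs <;> ring
  · rw [dsHeight_restrict_eq_iff]
    exact ⟨fun i hi => ((hw.lower hc).1 i (by omega)).2.2.2, i, hi,
      lowerX_add_walk_lower_of_peak hpeak⟩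

/-- if `DS` is a double sequence of level `ℓ`, height `> 1` and shape
`k₁ ≥ ⋯ ≥ kₙ > 0`, then there is a nonempty even subset `T` and a double sequence
of level `ℓ - 1`, height one less, and shape `k'` with `k'ⱼ = kⱼ - 1` for `j ∈ T`
and `k'ⱼ = kⱼ` otherwise. -/
theorem stmt18 (n : ℕ) (hn : 2 ≤ n) (ℓ : ℤ) (k x y : Fin n → ℤ)
    (h : IsDoubleSeq ℓ k x y)
    (hh : 1 < DSHeight n hn x y)
    (hsort : ∀ i j : Fin n, i ≤ j → k j ≤ k i)
    (hpos : ∀ j, 0 < k j) :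
    ∃ T : Finset (Fin n), T.Nonempty ∧ Even T.card ∧
      ∃ x' y' : Fin n → ℤ,
        IsDoubleSeq (ℓ - 1) (fun j => if j ∈ T then k j - 1 else k j) x' y' ∧
        DSHeight n hn x' y' = DSHeight n hn x y - 1 :=
  stmt18_general n hn ℓ k x y h hh
end

section
/- Fix i with 1 ≤ i ≤ ⌊n/2⌋ and I = {1,…,2i} ⊆ {1,…,n} with n ≥ 5. Consider the vector v_I = ∑_{j∈I} e_j - (i-1)f in ℚ^{n+1} = span(e₁,…,eₙ,f), and the set S of all vectors ∑_{j∈J} e_j - (|J|/2 - 1)f over even subsets J ⊆ {1,…,n} (with J = ∅ giving f). Then there exist n linearly independent linear functionals ℓ₁,…,ℓₙ on ℚ^{n+1} that vanish on v_I and are nonnegative on every element of S. Consequently v_I spans an extremal ray of the cone generated by S. -/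
/-- The vector `∑_{j∈J} e_j - (|J|/2 - 1) f` in `ℚⁿ × ℚ·f`, associated to an even
subset `J` (a level-one conformal block divisor class; `J = ∅` gives `f = E`). -/
noncomputable def cbVec (n : ℕ) (J : Finset (Fin n)) : (Fin n → ℚ) × ℚ :=
  ((∑ j ∈ J, Pi.single j (1 : ℚ)), -(((J.card : ℚ) / 2) - 1))

/-- Membership in the cone generated by the vectors `cbVec n J` over even `J`. -/
def InCBCone (n : ℕ) (w : (Fin n → ℚ) × ℚ) : Prop :=
  ∃ c : Finset (Fin n) → ℚ, (∀ J, 0 ≤ c J) ∧ (∀ J, ¬ Even J.card → c J = 0) ∧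
    w = ∑ J ∈ (Finset.univ : Finset (Finset (Fin n))), c J • cbVec n J

/-!
For `k ∈ I` take `ℓ_k(a, b) = ∑ a_j - 2 a_k + 2 b`, and `ℓ_k(a, b) = a_k` for `k ∉ I`. On the
generator `v_J` these take the values `2 - 2 [k ∈ J]` and `[k ∈ J]`. So all `ℓ_k` are
nonnegative on the cone, all vanish on `v_I`, and for `J ≠ I` some `ℓ_k` is positive on `v_J`
(take `k` in the symmetric difference). If `u + w` is a multiple of `v_I`, every `ℓ_k` vanishes on
both `u` and `w`, so their conic expressions can only involve `v_I`. Independence of the `ℓ_k`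
follows by evaluating a vanishing combination at `f` and at each `e_m`.
-/

section ConicCombination

variable {𝕜 M ι κ : Type*} [Field 𝕜] [LinearOrder 𝕜] [IsStrictOrderedRing 𝕜]
  [AddCommGroup M] [Module 𝕜 M] [Fintype ι]

theorem LinearMap.map_sum_smul_nonneg (f : M →ₗ[𝕜] 𝕜) {g : ι → M} {c : ι → 𝕜}
    (hg : ∀ j, 0 ≤ f (g j)) (hc : ∀ j, 0 ≤ c j) : 0 ≤ f (∑ j, c j • g j) := by
  rw [map_sum]
  exact Finset.sum_nonneg fun j _ => by rw [map_smul, smul_eq_mul]; exact mul_nonneg (hc j) (hg j)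

theorem sum_smul_eq_smul_of_forall_map_eq_zero (L : κ → M →ₗ[𝕜] 𝕜)
    {g : ι → M} {i₀ : ι} (hg : ∀ k j, 0 ≤ L k (g j)) (hsep : ∀ j ≠ i₀, ∃ k, 0 < L k (g j))
    {c : ι → 𝕜} (hc : ∀ j, 0 ≤ c j) (hL : ∀ k, L k (∑ j, c j • g j) = 0) :
    ∑ j, c j • g j = c i₀ • g i₀ := by
  refine Fintype.sum_eq_single i₀ fun j hj => ?_
  obtain ⟨k, hk⟩ := hsep j hj
  have hterms := (Finset.sum_eq_zero_iff_of_nonneg fun j _ => mul_nonneg (hc j) (hg k j)).mp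
    (by simpa only [map_sum, map_smul, smul_eq_mul] using hL k) j (Finset.mem_univ j)
  rw [(mul_eq_zero.mp hterms).resolve_right hk.ne', zero_smul]

end ConicCombination

namespace CBCone

variable {n : ℕ} (I : Finset (Fin n))

/-- In the paper's coordinates `∑ a_j e_j - t f` we have `b = -t`, so for `k ∈ I` this is
`∑ a_j - 2 a_k - 2 t`. -/
noncomputable def rayFunctional (k : Fin n) : ((Fin n → ℚ) × ℚ) →ₗ[ℚ] ℚ :=
  let coord : Fin n → ((Fin n → ℚ) × ℚ) →ₗ[ℚ] ℚ :=
    fun j => (LinearMap.proj j).comp (LinearMap.fst ℚ _ ℚ)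
  if k ∈ I then ∑ j, coord j - (2 : ℚ) • coord k + (2 : ℚ) • LinearMap.snd ℚ _ ℚ else coord k

theorem rayFunctional_apply (k : Fin n) (a : Fin n → ℚ) (b : ℚ) :
    rayFunctional I k (a, b) = if k ∈ I then ∑ j, a j - 2 * a k + 2 * b else a k := by
  unfold rayFunctional
  split <;> simp

theorem cbVec_fst_apply (J : Finset (Fin n)) (k : Fin n) :
    (cbVec n J).1 k = if k ∈ J then 1 else 0 := by
  simp [cbVec, Finset.sum_apply, Pi.single_apply]

theorem sum_cbVec_fst (J : Finset (Fin n)) : ∑ j, (cbVec n J).1 j = J.card := by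
  simp [cbVec_fst_apply, Finset.sum_ite_mem]

theorem rayFunctional_cbVec (k : Fin n) (J : Finset (Fin n)) :
    rayFunctional I k (cbVec n J) =
      if k ∈ I then (if k ∈ J then 0 else 2) else (if k ∈ J then 1 else 0) := by
  rw [show cbVec n J = ((cbVec n J).1, -((J.card : ℚ) / 2 - 1)) from rfl, rayFunctional_apply,
    sum_cbVec_fst, cbVec_fst_apply]
  split <;> split <;> ring

theorem rayFunctional_cbVec_nonneg (k : Fin n) (J : Finset (Fin n)) :
    0 ≤ rayFunctional I k (cbVec n J) := by
  rw [rayFunctional_cbVec]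
  split <;> split <;> norm_num

theorem rayFunctional_cbVec_self (k : Fin n) : rayFunctional I k (cbVec n I) = 0 := by
  rw [rayFunctional_cbVec]
  split <;> simp_all

theorem exists_rayFunctional_cbVec_pos {J : Finset (Fin n)} (hJ : J ≠ I) :
    ∃ k, 0 < rayFunctional I k (cbVec n J) := by
  obtain ⟨k, hk⟩ := Finset.symmDiff_nonempty.mpr hJ
  refine ⟨k, ?_⟩
  rw [rayFunctional_cbVec]
  rcases Finset.mem_symmDiff.mp hk with ⟨hkJ, hkI⟩ | ⟨hkI, hkJ⟩ <;> simp [*]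

theorem rayFunctional_f (k : Fin n) : rayFunctional I k (0, 1) = if k ∈ I then 2 else 0 := by
  rw [rayFunctional_apply]
  split <;> simp

theorem rayFunctional_single (k m : Fin n) :
    rayFunctional I k (Pi.single m 1, 0) =
      (if k ∈ I then 1 else 0) + if k = m then (if m ∈ I then -2 else 1) else 0 := by
  rw [rayFunctional_apply]
  by_cases hkm : k = m
  · subst hkm
    split <;> norm_num
  · split <;> simp [hkm]

theorem linearIndependent_rayFunctional : LinearIndependent ℚ (rayFunctional I) := by
  rw [Fintype.linearIndependent_iff]
  intro g hg m
  have eval x : ∑ k, g k * rayFunctional I k x = 0 := by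
    simpa using LinearMap.congr_fun hg x
  have hI : ∑ k ∈ I, g k = 0 := by
    have := eval (0, 1)
    simp only [rayFunctional_f, mul_ite, mul_zero, Finset.sum_ite_mem, Finset.univ_inter,
      ← Finset.sum_mul] at this
    linarith
  have hm := eval (Pi.single m 1, 0)
  simp only [rayFunctional_single, mul_add, Finset.sum_add_distrib, mul_ite, mul_one, mul_zero,
    Finset.sum_ite_mem, Finset.univ_inter, hI, zero_add, Finset.sum_ite_eq', Finset.mem_univ,
    if_true] at hm
  split at hm <;> linarith

variable {I}

theorem _root_.InCBCone.rayFunctional_nonneg {u : (Fin n → ℚ) × ℚ} (hu : InCBCone n u)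
    (k : Fin n) : 0 ≤ rayFunctional I k u := by
  obtain ⟨c, hc, -, rfl⟩ := hu
  exact (rayFunctional I k).map_sum_smul_nonneg (fun J => rayFunctional_cbVec_nonneg I k J) hc

theorem _root_.InCBCone.exists_eq_smul_cbVec {u : (Fin n → ℚ) × ℚ} (hu : InCBCone n u)
    (hL : ∀ k, rayFunctional I k u = 0) : ∃ c : ℚ, 0 ≤ c ∧ u = c • cbVec n I := by
  obtain ⟨c, hc, -, rfl⟩ := hu
  exact ⟨c I, hc I, sum_smul_eq_smul_of_forall_map_eq_zero (rayFunctional I)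
    (rayFunctional_cbVec_nonneg I) (fun _ => exists_rayFunctional_cbVec_pos I) hc hL⟩

end CBCone

open CBCone in
theorem stmt19_general (n : ℕ)
    (I : Finset (Fin n)) :
    (∃ L : Fin n → (((Fin n → ℚ) × ℚ) →ₗ[ℚ] ℚ),
      LinearIndependent ℚ L ∧
      (∀ k, L k (cbVec n I) = 0) ∧
      (∀ k (J : Finset (Fin n)), Even J.card → 0 ≤ L k (cbVec n J))) ∧
    (∀ u w : (Fin n → ℚ) × ℚ, InCBCone n u → InCBCone n w →
      ∀ c : ℚ, 0 ≤ c → u + w = c • cbVec n I →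
        ∃ c₁ c₂ : ℚ, 0 ≤ c₁ ∧ 0 ≤ c₂ ∧ u = c₁ • cbVec n I ∧ w = c₂ • cbVec n I) := by
  refine ⟨⟨rayFunctional I, linearIndependent_rayFunctional I, rayFunctional_cbVec_self I,
    fun k J _ => rayFunctional_cbVec_nonneg I k J⟩, ?_⟩
  rintro u w hu hw c - hsum
  have hvanish k : rayFunctional I k u = 0 ∧ rayFunctional I k w = 0 := by
    have hadd := congrArg (rayFunctional I k) hsum
    rw [map_add, map_smul, rayFunctional_cbVec_self, smul_zero] at hadd
    have := hu.rayFunctional_nonneg (I := I) k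
    have := hw.rayFunctional_nonneg (I := I) k
    constructor <;> linarith
  obtain ⟨c₁, hc₁, rfl⟩ := hu.exists_eq_smul_cbVec fun k => (hvanish k).1
  obtain ⟨c₂, hc₂, rfl⟩ := hw.exists_eq_smul_cbVec fun k => (hvanish k).2
  exact ⟨c₁, c₂, hc₁, hc₂, rfl, rfl⟩

/-- for `n ≥ 5`, `1 ≤ i ≤ ⌊n/2⌋` and `I = {1,…,2i}`, there are `n`
linearly independent linear functionals vanishing on `v_I = ∑_{j∈I} e_j - (i-1)f`
and nonnegative on all generators `cbVec n J` (`J` even); consequently `v_I` spans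
an extremal ray of the cone generated by these vectors. -/
theorem stmt19 (n : ℕ) (hn : 5 ≤ n) (i : ℕ) (hi1 : 1 ≤ i) (hi2 : 2 * i ≤ n)
    (I : Finset (Fin n)) (hI : I = Finset.univ.filter fun j : Fin n => (j : ℕ) < 2 * i) :
    (∃ L : Fin n → (((Fin n → ℚ) × ℚ) →ₗ[ℚ] ℚ),
      LinearIndependent ℚ L ∧
      (∀ k, L k (cbVec n I) = 0) ∧
      (∀ k (J : Finset (Fin n)), Even J.card → 0 ≤ L k (cbVec n J))) ∧
    (∀ u w : (Fin n → ℚ) × ℚ, InCBCone n u → InCBCone n w →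
      ∀ c : ℚ, 0 ≤ c → u + w = c • cbVec n I →
        ∃ c₁ c₂ : ℚ, 0 ≤ c₁ ∧ 0 ≤ c₂ ∧ u = c₁ • cbVec n I ∧ w = c₂ • cbVec n I) :=
  stmt19_general n I
end
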